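/- For a ring R, every right ideal of R has a serial factorization if and only if either R is a right chain ring or R is isomorphic to a finite direct product of right duo right chain rings. -/

import Mathlib

open MulOpposite

universe u

/-- The product `A·B` of two right ideals of `R` (right ideals are `Rᵐᵒᵖ`-submodules of `R`):
the set of all finite sums of products `a * b` with `a ∈ A`, `b ∈ B`. -/
def rmul {R : Type u} [Ring R] (A B : Submodule Rᵐᵒᵖ R) : Submodule Rᵐᵒᵖ R :=
  Submodule.span Rᵐᵒᵖ {x : R | ∃ a ∈ A, ∃ b ∈ B, x = a * b}

/-- The product `A₁⋯Aₙ` of a (possibly empty) list of right ideals. -/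
def rprod {R : Type u} [Ring R] : List (Submodule Rᵐᵒᵖ R) → Submodule Rᵐᵒᵖ R
  | [] => ⊤
  | [A] => A
  | A :: l => rmul A (rprod l)

/-- A finite family of right ideals is coindependent if `Aᵢ + ⋂_{j ≠ i} Aⱼ = R` for every `i`. -/
def Coindep {R : Type u} [Ring R] {n : ℕ} (A : Fin n → Submodule Rᵐᵒᵖ R) : Prop :=
  ∀ i, A i ⊔ (⨅ j, ⨅ (_ : j ≠ i), A j) = ⊤

/-- A module is uniserial if its submodules are linearly ordered by inclusion. -/
def IsUniserialMod (S : Type*) [Ring S] (M : Type*) [AddCommGroup M] [Module S M] : Prop :=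
  ∀ N P : Submodule S M, N ≤ P ∨ P ≤ N

/-- A right ideal is a two-sided ideal if it is also closed under left multiplication. -/
def IsTwoSidedRid {R : Type u} [Ring R] (A : Submodule Rᵐᵒᵖ R) : Prop :=
  ∀ (r : R), ∀ x ∈ A, r * x ∈ A

/-- A serial factorization of a right ideal `A`: a factorization `A = A₁⋯Aₙ` into proper
right ideals that pairwise commute, form a coindependent family, and are such that every
quotient `R/Aᵢ` is a uniserial right `R`-module. -/
def IsSerialFact {R : Type u} [Ring R] {n : ℕ} (A : Submodule Rᵐᵒᵖ R)
    (F : Fin n → Submodule Rᵐᵒᵖ R) : Prop :=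
  (∀ i, F i ≠ ⊤) ∧ (∀ i j, rmul (F i) (F j) = rmul (F j) (F i)) ∧ Coindep F ∧
    (∀ i, IsUniserialMod Rᵐᵒᵖ (R ⧸ F i)) ∧ A = rprod (List.ofFn F)

/-- A right ideal has a serial factorization if it admits one of some length. -/
def HasSerialFact {R : Type u} [Ring R] (A : Submodule Rᵐᵒᵖ R) : Prop :=
  ∃ (n : ℕ) (F : Fin n → Submodule Rᵐᵒᵖ R), IsSerialFact A F

/-- A right chain ring: its right ideals are linearly ordered by inclusion. -/
def IsRightChainRing (R : Type u) [Ring R] : Prop :=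
  ∀ A B : Submodule Rᵐᵒᵖ R, A ≤ B ∨ B ≤ A

/-- A ring is right duo if every right ideal is a two-sided ideal. -/
def IsRightDuo (R : Type u) [Ring R] : Prop :=
  ∀ A : Submodule Rᵐᵒᵖ R, IsTwoSidedRid A

/-- The principal right ideal `rR`. -/
def rspan {R : Type u} [Ring R] (r : R) : Submodule Rᵐᵒᵖ R :=
  Submodule.span Rᵐᵒᵖ ({r} : Set R)

/-!
If `⊥ = F₁ ⋯ Fₙ` is a serial factorization with `n ≤ 1`, then `R = R/⊥` is uniserial, i.e. a right
chain ring. If `n ≥ 2`, each `Fᵢ` is comaximal with and commutes with some `Fⱼ`, which forces it to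
be two-sided; comaximal commuting right ideals satisfy `A ∩ B = AB`, so `⋂ Fᵢ = ⊥` and the Chinese
remainder theorem gives `R ≅ ∏ R/Fᵢ`, a product of right chain rings. A right ideal with a serial
factorization is two-sided or has uniserial quotient; applied to `π⁻¹(D) ∩ ⋂_{j ≠ i} Fⱼ` for a
right ideal `D` of `R/Fᵢ`, this shows that `R/Fᵢ` is right duo.

Conversely, in a right chain ring a proper right ideal is its own serial factorization, and in a
product of right duo right chain rings a right ideal is the intersection of its coordinate pieces,
which commute, are coindependent and have uniserial quotients.
-/

variable {R : Type u} [Ring R]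

theorem mul_mem_of_mem_rid (A : Submodule Rᵐᵒᵖ R) {a : R} (b : R) (ha : a ∈ A) : a * b ∈ A :=
  A.smul_mem (op b) ha

theorem rmul_le {A B C : Submodule Rᵐᵒᵖ R} (h : ∀ a ∈ A, ∀ b ∈ B, a * b ∈ C) : rmul A B ≤ C :=
  Submodule.span_le.2 <| by rintro _ ⟨a, ha, b, hb, rfl⟩; exact h a ha b hb

theorem mul_mem_rmul {A B : Submodule Rᵐᵒᵖ R} {a b : R} (ha : a ∈ A) (hb : b ∈ B) :
    a * b ∈ rmul A B :=
  Submodule.subset_span ⟨a, ha, b, hb, rfl⟩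

-- As an additive subgroup, `rmul A B` is the product of the `ℤ`-submodules `A` and `B` of the
-- `ℤ`-algebra `R`; this transfers associativity and the induction principle for products.
theorem restrictScalars_rmul (A B : Submodule Rᵐᵒᵖ R) :
    (rmul A B).restrictScalars ℤ = A.restrictScalars ℤ * B.restrictScalars ℤ := by
  refine le_antisymm (fun x hx => ?_)
    (Submodule.mul_le.2 fun a ha b hb => Submodule.subset_span ⟨a, ha, b, hb, rfl⟩)
  induction hx using Submodule.span_induction with
  | mem x hx =>
    obtain ⟨a, ha, b, hb, rfl⟩ := hx
    exact Submodule.mul_mem_mul ha hb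
  | zero => exact zero_mem _
  | add x y _ _ hx hy => exact add_mem hx hy
  | smul r x _ hx =>
    refine Submodule.mul_induction_on hx (fun a ha b hb => ?_) fun x y hx hy => ?_
    · rw [← op_unop r, op_smul_eq_mul, mul_assoc]
      exact Submodule.mul_mem_mul ha (mul_mem_of_mem_rid B _ hb)
    · rw [smul_add]
      exact add_mem hx hy

theorem rmul_induction {A B : Submodule Rᵐᵒᵖ R} {p : R → Prop} {x : R} (hx : x ∈ rmul A B)
    (mul : ∀ a ∈ A, ∀ b ∈ B, p (a * b)) (add : ∀ x y, p x → p y → p (x + y)) : p x := by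
  have hx' : x ∈ A.restrictScalars ℤ * B.restrictScalars ℤ := by
    rw [← restrictScalars_rmul]
    exact hx
  exact Submodule.mul_induction_on hx' mul add

theorem rmul_assoc (A B C : Submodule Rᵐᵒᵖ R) : rmul (rmul A B) C = rmul A (rmul B C) :=
  Submodule.restrictScalars_injective ℤ _ _ <| by simp only [restrictScalars_rmul, mul_assoc]

theorem rmul_le_left (A B : Submodule Rᵐᵒᵖ R) : rmul A B ≤ A :=
  rmul_le fun _ ha b _ => mul_mem_of_mem_rid A b ha

theorem rmul_top (A : Submodule Rᵐᵒᵖ R) : rmul A ⊤ = A :=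
  le_antisymm (rmul_le_left A ⊤) fun a ha => by
    simpa using mul_mem_rmul ha (Submodule.mem_top (x := 1))

theorem rprod_cons (A : Submodule Rᵐᵒᵖ R) (l : List (Submodule Rᵐᵒᵖ R)) :
    rprod (A :: l) = rmul A (rprod l) := by
  cases l with
  | nil => exact (rmul_top A).symm
  | cons B l => rfl

theorem rmul_rprod_comm (A : Submodule Rᵐᵒᵖ R) :
    ∀ l : List (Submodule Rᵐᵒᵖ R), l ≠ [] → (∀ B ∈ l, rmul A B = rmul B A) →
      rmul A (rprod l) = rmul (rprod l) A
  | [B], _, h => h B (List.mem_singleton_self B)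
  | B :: C :: l, _, h => by
    have hl := rmul_rprod_comm A (C :: l) (List.cons_ne_nil _ _) fun D hD =>
      h D (List.mem_cons_of_mem _ hD)
    rw [rprod_cons, ← rmul_assoc, h B List.mem_cons_self, rmul_assoc, hl, rmul_assoc]

theorem rid_eq_top_of_one_mem (A : Submodule Rᵐᵒᵖ R) (h : (1 : R) ∈ A) : A = ⊤ :=
  Submodule.eq_top_iff'.2 fun x => by simpa using mul_mem_of_mem_rid A x h

theorem exists_add_eq_one_of_sup_eq_top {A B : Submodule Rᵐᵒᵖ R} (h : A ⊔ B = ⊤) :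
    ∃ a ∈ A, ∃ b ∈ B, a + b = 1 :=
  Submodule.mem_sup.1 (h ▸ Submodule.mem_top)

theorem isTwoSidedRid_rmul {A : Submodule Rᵐᵒᵖ R} (hA : IsTwoSidedRid A) (B : Submodule Rᵐᵒᵖ R) :
    IsTwoSidedRid (rmul A B) := fun r _ hx =>
  rmul_induction (p := fun x => r * x ∈ rmul A B) hx
    (fun a ha b hb => by rw [← mul_assoc]; exact mul_mem_rmul (hA r a ha) hb)
    fun x y hx hy => by rw [mul_add]; exact add_mem hx hy

-- `r x = a (r x) + (b r) x` with `a ∈ A`, and `(b r) x ∈ B A = A B ⊆ A`.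
theorem isTwoSidedRid_of_sup_eq_top {A B : Submodule Rᵐᵒᵖ R} (hsup : A ⊔ B = ⊤)
    (hcomm : rmul A B = rmul B A) : IsTwoSidedRid A := by
  intro r x hx
  obtain ⟨a, ha, b, hb, hab⟩ := exists_add_eq_one_of_sup_eq_top hsup
  have hrx : r * x = a * (r * x) + b * r * x := by
    rw [mul_assoc b, ← add_mul, hab, one_mul]
  rw [hrx]
  refine add_mem (mul_mem_of_mem_rid A _ ha) ?_
  exact (hcomm ▸ rmul_le_left A B) (mul_mem_rmul (mul_mem_of_mem_rid B r hb) hx)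

theorem inf_eq_rmul {A B : Submodule Rᵐᵒᵖ R} (hsup : A ⊔ B = ⊤)
    (hcomm : rmul A B = rmul B A) : A ⊓ B = rmul A B := by
  refine le_antisymm (fun x ⟨hxA, hxB⟩ => ?_)
    (le_inf (rmul_le_left A B) (hcomm ▸ rmul_le_left B A))
  obtain ⟨a, ha, b, hb, hab⟩ := exists_add_eq_one_of_sup_eq_top hsup
  have hx : x = a * x + b * x := by rw [← add_mul, hab, one_mul]
  rw [hx]
  exact add_mem (mul_mem_rmul ha hxB) (hcomm ▸ mul_mem_rmul hb hxA)

theorem Coindep.sup_eq_top {n : ℕ} {F : Fin n → Submodule Rᵐᵒᵖ R} (h : Coindep F) {i j : Fin n}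
    (hji : j ≠ i) : F i ⊔ F j = ⊤ :=
  top_unique <| (h i).ge.trans <| sup_le_sup_left (iInf₂_le j hji) _

theorem coindep_comp {ι : Type*} {G : ι → Submodule Rᵐᵒᵖ R}
    (hG : ∀ i, G i ⊔ ⨅ (j) (_ : j ≠ i), G j = ⊤) {n : ℕ} {σ : Fin n → ι}
    (hσ : Function.Injective σ) : Coindep (G ∘ σ) := by
  intro s
  refine top_unique ((hG (σ s)).ge.trans (sup_le_sup_left ?_ _))
  exact le_iInf₂ fun t hts => iInf_le_of_le (σ t) (iInf_le _ (hσ.ne hts))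

theorem iInf_succ_eq {α : Type*} [CompleteLattice α] {n : ℕ} (f : Fin (n + 1) → α) :
    ⨅ i : Fin n, f i.succ = ⨅ (i : Fin (n + 1)) (_ : i ≠ 0), f i :=
  le_antisymm
    (le_iInf₂ fun i hi => by obtain ⟨j, rfl⟩ := Fin.exists_succ_eq.2 hi; exact iInf_le _ j)
    (le_iInf fun i => iInf_le_of_le i.succ (iInf_le _ i.succ_ne_zero))

theorem rprod_ofFn_eq_iInf : ∀ {n : ℕ} (F : Fin n → Submodule Rᵐᵒᵖ R), Coindep F →
    (∀ i j, rmul (F i) (F j) = rmul (F j) (F i)) → rprod (List.ofFn F) = ⨅ i, F i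
  | 0, F, _, _ => (iInf_of_empty F).symm
  | 1, F, _, _ => by simp [rprod]
  | n + 2, F, hco, hcomm => by
    set T := rprod (List.ofFn fun i : Fin (n + 1) => F (Fin.succ i))
    have hT : T = ⨅ i, F (Fin.succ i) :=
      rprod_ofFn_eq_iInf _ (coindep_comp hco (Fin.succ_injective _)) fun i j => hcomm _ _
    have hsup : F 0 ⊔ T = ⊤ := by rw [hT, iInf_succ_eq]; exact hco 0
    have hc : rmul (F 0) T = rmul T (F 0) := by
      refine rmul_rprod_comm _ _ (by simp) fun B hB => ?_
      obtain ⟨i, rfl⟩ := List.mem_ofFn.1 hB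
      exact hcomm _ _
    rw [List.ofFn_succ, rprod_cons, ← inf_eq_rmul hsup hc, hT, iInf_succ_eq, ← iInf_split_single]

theorem exists_sub_mem_of_coindep {n : ℕ} {F : Fin n → Submodule Rᵐᵒᵖ R} (hco : Coindep F)
    (x : Fin n → R) : ∃ y : R, ∀ i, y - x i ∈ F i := by
  choose a ha c hc hac using fun i => exists_add_eq_one_of_sup_eq_top (hco i)
  refine ⟨∑ j, c j * x j, fun i => ?_⟩
  have hxi : a i * x i + c i * x i = x i := by rw [← add_mul, hac i, one_mul]
  have hci : c i * x i - x i = -(a i * x i) := by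
    calc c i * x i - x i = c i * x i - (a i * x i + c i * x i) := by rw [hxi]
      _ = -(a i * x i) := by abel
  rw [← Finset.sum_erase_add _ _ (Finset.mem_univ i), add_sub_assoc, hci]
  refine (F i).add_mem ((F i).sum_mem fun j hj => ?_)
    ((F i).neg_mem (mul_mem_of_mem_rid _ _ (ha i)))
  have hle : (⨅ (k) (_ : k ≠ j), F k) ≤ F i :=
    iInf_le_of_le i (iInf_le _ (Finset.ne_of_mem_erase hj).symm)
  exact mul_mem_of_mem_rid _ _ (hle (hc j))

theorem isUniserialMod_quotient_iff {S M : Type*} [Ring S] [AddCommGroup M] [Module S M]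
    (N : Submodule S M) :
    IsUniserialMod S (M ⧸ N) ↔ ∀ P Q : Submodule S M, N ≤ P → N ≤ Q → P ≤ Q ∨ Q ≤ P := by
  let e := Submodule.comapMkQRelIso N
  refine ⟨fun h P Q hP hQ => ?_, fun h P Q => ?_⟩
  · exact (h (e.symm ⟨P, hP⟩) (e.symm ⟨Q, hQ⟩)).imp e.symm.le_iff_le.1 e.symm.le_iff_le.1
  · exact (h _ _ (e P).2 (e Q).2).imp e.le_iff_le.1 e.le_iff_le.1

theorem IsSerialFact.isUniserialMod {A : Submodule Rᵐᵒᵖ R} {n : ℕ} {F : Fin n → Submodule Rᵐᵒᵖ R}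
    (hF : IsSerialFact A F) (hn : n ≤ 1) : IsUniserialMod Rᵐᵒᵖ (R ⧸ A) := by
  obtain ⟨-, -, -, huni, hA⟩ := hF
  interval_cases n
  · refine (isUniserialMod_quotient_iff _).2 fun P Q hP hQ => Or.inl ?_
    simp only [hA, List.ofFn_zero, rprod, top_le_iff] at hP hQ
    rw [hP, hQ]
  · have h1 : rprod (List.ofFn F) = F 0 := by simp [rprod]
    rw [hA, h1]
    exact huni 0

theorem IsSerialFact.isTwoSidedRid {A : Submodule Rᵐᵒᵖ R} {n : ℕ} {F : Fin n → Submodule Rᵐᵒᵖ R}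
    (hF : IsSerialFact A F) (hn : 2 ≤ n) (i : Fin n) : IsTwoSidedRid (F i) := by
  have := Fin.nontrivial_iff_two_le.2 hn
  obtain ⟨j, hj⟩ := exists_ne i
  obtain ⟨-, hcomm, hco, -, -⟩ := hF
  exact isTwoSidedRid_of_sup_eq_top (Coindep.sup_eq_top hco hj) (hcomm i j)

theorem HasSerialFact.isTwoSidedRid_or_isUniserialMod {A : Submodule Rᵐᵒᵖ R}
    (h : HasSerialFact A) : IsTwoSidedRid A ∨ IsUniserialMod Rᵐᵒᵖ (R ⧸ A) := by
  obtain ⟨n, F, hF⟩ : ∃ n, ∃ F : Fin n → _, IsSerialFact A F := h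
  rcases le_or_gt n 1 with hn | hn
  · exact Or.inr (IsSerialFact.isUniserialMod hF hn)
  · obtain ⟨m, rfl⟩ : ∃ m, n = m + 1 := ⟨n - 1, by omega⟩
    have hF0 := IsSerialFact.isTwoSidedRid hF hn 0
    obtain ⟨-, -, -, -, hA⟩ := hF
    rw [hA, List.ofFn_succ, rprod_cons]
    exact Or.inl (isTwoSidedRid_rmul hF0 _)

theorem hasSerialFact_iInf {ι : Type*} [Finite ι] (G : ι → Submodule Rᵐᵒᵖ R)
    (hcomm : ∀ i j, rmul (G i) (G j) = rmul (G j) (G i))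
    (hco : ∀ i, G i ⊔ ⨅ (j) (_ : j ≠ i), G j = ⊤)
    (huni : ∀ i, IsUniserialMod Rᵐᵒᵖ (R ⧸ G i)) : HasSerialFact (⨅ i, G i) := by
  let σ : Fin (Nat.card {i // G i ≠ ⊤}) → ι := Subtype.val ∘ (Finite.equivFin _).symm
  have hσ : Function.Injective σ := Subtype.val_injective.comp (Equiv.injective _)
  have hcoσ : Coindep (G ∘ σ) := coindep_comp hco hσ
  have hcommσ : ∀ s t, rmul (G (σ s)) (G (σ t)) = rmul (G (σ t)) (G (σ s)) := fun s t => hcomm _ _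
  refine ⟨_, G ∘ σ, fun s => ((Finite.equivFin _).symm s).2, hcommσ, hcoσ, fun s => huni _, ?_⟩
  rw [rprod_ofFn_eq_iInf _ hcoσ hcommσ]
  refine le_antisymm (le_iInf fun s => iInf_le _ _) (le_iInf fun i => ?_)
  by_cases hi : G i = ⊤
  · rw [hi]
    exact le_top
  · exact iInf_le_of_le ((Finite.equivFin _) ⟨i, hi⟩) (by simp [σ])

theorem isRightChainRing_iff_isUniserialMod :
    IsRightChainRing R ↔ IsUniserialMod Rᵐᵒᵖ (R ⧸ (⊥ : Submodule Rᵐᵒᵖ R)) := by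
  rw [isUniserialMod_quotient_iff]
  exact ⟨fun h P Q _ _ => h P Q, fun h P Q => h P Q bot_le bot_le⟩

theorem hasSerialFact_of_isRightChainRing (h : IsRightChainRing R) (A : Submodule Rᵐᵒᵖ R) :
    HasSerialFact A := by
  have huni : IsUniserialMod Rᵐᵒᵖ (R ⧸ A) :=
    (isUniserialMod_quotient_iff A).2 fun P Q _ _ => h P Q
  simpa using hasSerialFact_iInf (fun _ : Unit => A) (fun _ _ => rfl) (by simp) fun _ => huni

section Comap

variable {S : Type*} [Ring S]

def rcomap (f : R →+* S) (T : Submodule Sᵐᵒᵖ S) : Submodule Rᵐᵒᵖ R where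
  carrier := f ⁻¹' T
  add_mem' {x y} hx hy := by
    simp only [Set.mem_preimage, map_add, SetLike.mem_coe] at *
    exact T.add_mem hx hy
  zero_mem' := by simp
  smul_mem' r x hx := by
    simp only [Set.mem_preimage, SetLike.mem_coe] at *
    rw [← op_unop r, op_smul_eq_mul, map_mul]
    exact mul_mem_of_mem_rid T _ hx

@[simp]
theorem mem_rcomap {f : R →+* S} {T : Submodule Sᵐᵒᵖ S} {x : R} : x ∈ rcomap f T ↔ f x ∈ T :=
  Iff.rfl

theorem rcomap_mono {f : R →+* S} {T₁ T₂ : Submodule Sᵐᵒᵖ S} (h : T₁ ≤ T₂) :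
    rcomap f T₁ ≤ rcomap f T₂ :=
  fun _ hx => h hx

theorem rcomap_le_rcomap_iff {f : R →+* S} (hf : Function.Surjective f)
    {T₁ T₂ : Submodule Sᵐᵒᵖ S} : rcomap f T₁ ≤ rcomap f T₂ ↔ T₁ ≤ T₂ := by
  refine ⟨fun h t ht => ?_, rcomap_mono⟩
  obtain ⟨x, rfl⟩ := hf t
  exact h ht

theorem isRightChainRing_of_surjective {f : R →+* S} (hf : Function.Surjective f)
    (h : IsUniserialMod Rᵐᵒᵖ (R ⧸ rcomap f ⊥)) : IsRightChainRing S := fun _ _ =>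
  ((isUniserialMod_quotient_iff _).1 h _ _ (rcomap_mono bot_le) (rcomap_mono bot_le)).imp
    (rcomap_le_rcomap_iff hf).1 (rcomap_le_rcomap_iff hf).1

-- For a proper right ideal `D` of `S`, `c` makes `rcomap f D` and `C` incomparable, so the
-- right ideal `rcomap f D ⊓ C` is two-sided; its image under `f` is `D`.
theorem isRightDuo_of_surjective (H : ∀ A : Submodule Rᵐᵒᵖ R, HasSerialFact A) {f : R →+* S}
    (hf : Function.Surjective f) {C : Submodule Rᵐᵒᵖ R} {c : R} (hc : c ∈ C) (hfc : f c = 1)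
    (hker : ¬ rcomap f ⊥ ≤ C) : IsRightDuo S := by
  intro D s t ht
  by_cases hD : D = ⊤
  · exact hD ▸ Submodule.mem_top
  have hPC : ¬ rcomap f D ≤ C := fun h => hker ((rcomap_mono bot_le).trans h)
  have hCP : ¬ C ≤ rcomap f D := fun h =>
    hD (rid_eq_top_of_one_mem D (hfc ▸ mem_rcomap.1 (h hc)))
  have hts : IsTwoSidedRid (rcomap f D ⊓ C) := by
    refine (HasSerialFact.isTwoSidedRid_or_isUniserialMod (H _)).resolve_right fun huni => ?_
    rcases (isUniserialMod_quotient_iff _).1 huni _ _ inf_le_left inf_le_right with h | h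
    exacts [hPC h, hCP h]
  obtain ⟨y, rfl⟩ := hf t
  obtain ⟨r, rfl⟩ := hf s
  have hcy : c * y ∈ rcomap f D ⊓ C :=
    ⟨by simpa [hfc] using ht, mul_mem_of_mem_rid C y hc⟩
  simpa [hfc, mul_assoc] using (hts r _ hcy).1

end Comap

def idealOfRid {A : Submodule Rᵐᵒᵖ R} (hA : IsTwoSidedRid A) : Ideal R where
  toAddSubmonoid := A.toAddSubmonoid
  smul_mem' := hA

@[simp]
theorem mem_idealOfRid {A : Submodule Rᵐᵒᵖ R} (hA : IsTwoSidedRid A) {x : R} :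
    x ∈ idealOfRid hA ↔ x ∈ A :=
  Iff.rfl

instance isTwoSided_idealOfRid {A : Submodule Rᵐᵒᵖ R} (hA : IsTwoSidedRid A) :
    (idealOfRid hA).IsTwoSided :=
  ⟨fun b ha => mul_mem_of_mem_rid A b ha⟩

theorem rcomap_mk_idealOfRid {A : Submodule Rᵐᵒᵖ R} (hA : IsTwoSidedRid A) :
    rcomap (Ideal.Quotient.mk (idealOfRid hA)) ⊥ = A := by
  ext
  simp [Ideal.Quotient.eq_zero_iff_mem]

noncomputable def ringEquivPiQuotient {n : ℕ} {F : Fin n → Submodule Rᵐᵒᵖ R}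
    (hts : ∀ i, IsTwoSidedRid (F i)) (hco : Coindep F) (hbot : ⨅ i, F i = ⊥) :
    R ≃+* ∀ i, R ⧸ idealOfRid (hts i) :=
  RingEquiv.ofBijective (RingHom.pi fun i => Ideal.Quotient.mk _) <| by
    refine ⟨(injective_iff_map_eq_zero _).2 fun x hx => ?_, fun g => ?_⟩
    · have hxF : x ∈ ⨅ i, F i := Submodule.mem_iInf _ |>.2 fun i =>
        (mem_idealOfRid (hts i)).1 (Ideal.Quotient.eq_zero_iff_mem.1 (congrFun hx i))
      simpa [hbot] using hxF
    · choose x hx using fun i => Ideal.Quotient.mk_surjective (g i)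
      obtain ⟨y, hy⟩ := exists_sub_mem_of_coindep hco x
      refine ⟨y, funext fun i => ?_⟩
      rw [← hx i]
      exact (Ideal.Quotient.mk_eq_mk_iff_sub_mem _ _).2 (hy i)

theorem exists_ringEquiv_pi_of_isSerialFact_bot (H : ∀ A : Submodule Rᵐᵒᵖ R, HasSerialFact A)
    {n : ℕ} {F : Fin n → Submodule Rᵐᵒᵖ R} (hF : IsSerialFact ⊥ F) (hn : 2 ≤ n) :
    ∃ (S : Fin n → Type u) (_ : ∀ i, Ring (S i)), (∀ i, Nontrivial (S i)) ∧
      (∀ i, IsRightDuo (S i) ∧ IsRightChainRing (S i)) ∧ Nonempty (R ≃+* ∀ i, S i) := by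
  have hts := IsSerialFact.isTwoSidedRid hF hn
  obtain ⟨hne, hcomm, hco, huni, hbot⟩ := hF
  refine ⟨fun i => R ⧸ idealOfRid (hts i), inferInstance, fun i => ?_, fun i => ⟨?_, ?_⟩,
    ⟨ringEquivPiQuotient hts hco (by rw [← rprod_ofFn_eq_iInf F hco hcomm, hbot])⟩⟩
  · exact Ideal.Quotient.nontrivial_iff.2 fun h =>
      hne i (rid_eq_top_of_one_mem _ ((Ideal.eq_top_iff_one _).1 h))
  · have := Fin.nontrivial_iff_two_le.2 hn
    obtain ⟨j, hji⟩ := exists_ne i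
    obtain ⟨a, ha, c, hc, hac⟩ := exists_add_eq_one_of_sup_eq_top (hco i)
    refine isRightDuo_of_surjective H Ideal.Quotient.mk_surjective hc ?_ fun hle => hne j ?_
    · rw [← map_one (Ideal.Quotient.mk _), ← hac, map_add,
        Ideal.Quotient.eq_zero_iff_mem.2 ((mem_idealOfRid (hts i)).2 ha), zero_add]
    · rw [rcomap_mk_idealOfRid (hts i)] at hle
      have hij : F i ≤ F j := hle.trans (iInf_le_of_le j (iInf_le _ hji))
      rw [← Coindep.sup_eq_top hco hji, sup_eq_right.2 hij]
  · exact isRightChainRing_of_surjective Ideal.Quotient.mk_surjective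
      (by rw [rcomap_mk_idealOfRid]; exact huni i)

section RingEquiv

variable {S : Type*} [Ring S]

def ridEquiv (e : R ≃+* S) : Submodule Rᵐᵒᵖ R ≃o Submodule Sᵐᵒᵖ S where
  toFun := rcomap (e.symm : S →+* R)
  invFun := rcomap (e : R →+* S)
  left_inv A := by ext; simp
  right_inv B := by ext; simp
  map_rel_iff' := rcomap_le_rcomap_iff e.symm.surjective

@[simp]
theorem mem_ridEquiv {e : R ≃+* S} {A : Submodule Rᵐᵒᵖ R} {x : S} :
    x ∈ ridEquiv e A ↔ e.symm x ∈ A :=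
  Iff.rfl

theorem ridEquiv_rmul (e : R ≃+* S) (A B : Submodule Rᵐᵒᵖ R) :
    ridEquiv e (rmul A B) = rmul (ridEquiv e A) (ridEquiv e B) := by
  refine le_antisymm (fun x hx => ?_) (rmul_le fun a ha b hb => ?_)
  · rw [← e.apply_symm_apply x]
    refine rmul_induction (p := fun y => e y ∈ rmul (ridEquiv e A) (ridEquiv e B)) hx
      (fun a ha b hb => ?_) fun y z hy hz => ?_
    · rw [map_mul]
      exact mul_mem_rmul (by simpa using ha) (by simpa using hb)
    · rw [map_add]
      exact add_mem hy hz
  · rw [mem_ridEquiv, map_mul]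
    exact mul_mem_rmul ha hb

theorem ridEquiv_rprod (e : R ≃+* S) :
    ∀ l : List (Submodule Rᵐᵒᵖ R), ridEquiv e (rprod l) = rprod (l.map (ridEquiv e))
  | [] => map_top (ridEquiv e)
  | A :: l => by rw [List.map_cons, rprod_cons, rprod_cons, ridEquiv_rmul, ridEquiv_rprod e l]

theorem IsSerialFact.map (e : R ≃+* S) {A : Submodule Rᵐᵒᵖ R} {n : ℕ}
    {F : Fin n → Submodule Rᵐᵒᵖ R} (hF : IsSerialFact A F) :
    IsSerialFact (ridEquiv e A) fun i => ridEquiv e (F i) := by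
  obtain ⟨hne, hcomm, hco, huni, hA⟩ := hF
  refine ⟨fun i h => hne i ((map_eq_top_iff (ridEquiv e)).1 h), fun i j => ?_, fun i => ?_,
    fun i => ?_, ?_⟩
  · rw [← ridEquiv_rmul, ← ridEquiv_rmul, hcomm]
  · simp only [← OrderIso.map_iInf, ← OrderIso.map_sup, hco i, map_top]
  · refine (isUniserialMod_quotient_iff _).2 fun P Q hP hQ => ?_
    have h := (isUniserialMod_quotient_iff _).1 (huni i) _ _
      ((ridEquiv e).le_symm_apply.2 hP) ((ridEquiv e).le_symm_apply.2 hQ)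
    exact h.imp (ridEquiv e).symm.le_iff_le.1 (ridEquiv e).symm.le_iff_le.1
  · rw [hA, ridEquiv_rprod, List.map_ofFn]
    rfl

theorem hasSerialFact_of_ringEquiv (e : R ≃+* S) (H : ∀ A : Submodule Rᵐᵒᵖ R, HasSerialFact A)
    (B : Submodule Sᵐᵒᵖ S) : HasSerialFact B := by
  obtain ⟨n, F, hF⟩ := H ((ridEquiv e).symm B)
  exact ⟨n, _, by simpa using IsSerialFact.map e hF⟩

end RingEquiv

section Pi

variable {ι : Type*} {S : ι → Type*} [∀ i, Ring (S i)]

def coordRid (i : ι) (T : Submodule (S i)ᵐᵒᵖ (S i)) : Submodule (∀ j, S j)ᵐᵒᵖ (∀ j, S j) :=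
  rcomap (Pi.evalRingHom S i) T

@[simp]
theorem mem_coordRid {i : ι} {T : Submodule (S i)ᵐᵒᵖ (S i)} {a : ∀ j, S j} :
    a ∈ coordRid i T ↔ a i ∈ T :=
  Iff.rfl

def compRid [DecidableEq ι] (i : ι) (A : Submodule (∀ j, S j)ᵐᵒᵖ (∀ j, S j)) :
    Submodule (S i)ᵐᵒᵖ (S i) where
  carrier := {x | Pi.single i x ∈ A}
  add_mem' {x y} hx hy := by
    simp only [Set.mem_ofPred_eq, Pi.single_add] at *
    exact A.add_mem hx hy
  zero_mem' := by simp
  smul_mem' r x hx := by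
    simp only [Set.mem_ofPred_eq] at *
    rw [← op_unop r, op_smul_eq_mul, Pi.single_mul]
    exact mul_mem_of_mem_rid A _ hx

@[simp]
theorem mem_compRid [DecidableEq ι] {i : ι} {A : Submodule (∀ j, S j)ᵐᵒᵖ (∀ j, S j)} {x : S i} :
    x ∈ compRid i A ↔ Pi.single i x ∈ A :=
  Iff.rfl

theorem mem_iff_forall_mem_compRid [Fintype ι] [DecidableEq ι]
    {A : Submodule (∀ j, S j)ᵐᵒᵖ (∀ j, S j)} {a : ∀ j, S j} :
    a ∈ A ↔ ∀ i, a i ∈ compRid i A := by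
  refine ⟨fun ha i => ?_, fun h => ?_⟩
  · simpa [← Pi.single_mul_right] using mul_mem_of_mem_rid A (Pi.single i 1) ha
  · rw [← Finset.univ_sum_single a]
    exact A.sum_mem fun i _ => h i

theorem iInf_coordRid_compRid [Fintype ι] [DecidableEq ι] (A : Submodule (∀ j, S j)ᵐᵒᵖ (∀ j, S j)) :
    ⨅ i, coordRid i (compRid i A) = A := by
  ext a
  simp only [Submodule.mem_iInf, mem_coordRid, ← mem_iff_forall_mem_compRid]

theorem eq_coordRid_compRid_of_le [Fintype ι] [DecidableEq ι] {i : ι}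
    {T : Submodule (S i)ᵐᵒᵖ (S i)} {P : Submodule (∀ j, S j)ᵐᵒᵖ (∀ j, S j)}
    (h : coordRid i T ≤ P) : P = coordRid i (compRid i P) := by
  ext a
  refine ⟨fun ha => mem_iff_forall_mem_compRid.1 ha i, fun ha => ?_⟩
  refine mem_iff_forall_mem_compRid.2 fun j => ?_
  rcases eq_or_ne j i with rfl | hji
  · exact ha
  · exact h (by simp [Pi.single_eq_of_ne' hji])

theorem isUniserialMod_quotient_coordRid [Fintype ι] [DecidableEq ι] {i : ι}
    (h : IsRightChainRing (S i)) (T : Submodule (S i)ᵐᵒᵖ (S i)) :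
    IsUniserialMod (∀ j, S j)ᵐᵒᵖ ((∀ j, S j) ⧸ coordRid i T) := by
  refine (isUniserialMod_quotient_iff _).2 fun P Q hP hQ => ?_
  rw [eq_coordRid_compRid_of_le hP, eq_coordRid_compRid_of_le hQ]
  exact (h _ _).imp rcomap_mono rcomap_mono

theorem rmul_coordRid_of_ne [DecidableEq ι] {i j : ι} (hij : i ≠ j) (hj : IsRightDuo (S j))
    (T : Submodule (S i)ᵐᵒᵖ (S i)) (T' : Submodule (S j)ᵐᵒᵖ (S j)) :
    rmul (coordRid (S := S) i T) (coordRid j T') = coordRid i T ⊓ coordRid j T' := by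
  refine le_antisymm (rmul_le fun a ha b hb => ⟨?_, ?_⟩) fun x ⟨hxi, hxj⟩ => ?_
  · exact mul_mem_of_mem_rid T (b i) ha
  · exact hj T' (a j) (b j) hb
  have hxe : x * Pi.single j 1 = Pi.single j (x j) := by
    simpa using (Pi.single_mul_right (f := x) (1 : S j)).symm
  have hx : x = x * (1 - Pi.single j 1) + Pi.single j 1 * (x * Pi.single j 1) := by
    rw [hxe, ← Pi.single_mul, one_mul, ← hxe, mul_sub, mul_one, sub_add_cancel]
  rw [hx]
  refine add_mem (mul_mem_rmul hxi ?_) (mul_mem_rmul ?_ (mul_mem_of_mem_rid _ _ hxj))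
  · rw [mem_coordRid, Pi.sub_apply, Pi.one_apply, Pi.single_eq_same, sub_self]
    exact zero_mem T'
  · rw [mem_coordRid, Pi.single_eq_of_ne hij]
    exact zero_mem T

theorem coordRid_sup_iInf_coordRid [DecidableEq ι] (T : ∀ i, Submodule (S i)ᵐᵒᵖ (S i)) (i : ι) :
    coordRid i (T i) ⊔ ⨅ (j) (_ : j ≠ i), coordRid j (T j) = ⊤ := by
  refine rid_eq_top_of_one_mem _ <|
    Submodule.mem_sup.2 ⟨1 - Pi.single i 1, ?_, Pi.single i 1, ?_, sub_add_cancel _ _⟩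
  · simp
  · simp only [Submodule.mem_iInf, mem_coordRid]
    exact fun j hji => by simp [Pi.single_eq_of_ne hji]

theorem hasSerialFact_pi [Finite ι] (h : ∀ i, IsRightDuo (S i) ∧ IsRightChainRing (S i))
    (A : Submodule (∀ j, S j)ᵐᵒᵖ (∀ j, S j)) : HasSerialFact A := by
  classical
  have := Fintype.ofFinite ι
  rw [← iInf_coordRid_compRid A]
  refine hasSerialFact_iInf _ (fun i j => ?_) (coordRid_sup_iInf_coordRid _) fun i =>
    isUniserialMod_quotient_coordRid (h i).2 _
  rcases eq_or_ne i j with rfl | hij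
  · rfl
  · rw [rmul_coordRid_of_ne hij (h j).1, rmul_coordRid_of_ne hij.symm (h i).1, inf_comm]

end Pi

theorem statement10_general {R : Type u} [Ring R] :
    (∀ A : Submodule Rᵐᵒᵖ R, HasSerialFact A) ↔
      (IsRightChainRing R ∨
        ∃ (k : ℕ) (S : Fin k → Type u) (inst : ∀ i, Ring (S i)),
          (∀ i, Nontrivial (S i)) ∧
          (∀ i, IsRightDuo (S i) ∧ IsRightChainRing (S i)) ∧
          Nonempty (R ≃+* ((i : Fin k) → S i))) := by
  refine ⟨fun H => ?_, ?_⟩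
  · obtain ⟨n, F, hF⟩ : ∃ n, ∃ F : Fin n → _, IsSerialFact ⊥ F := H ⊥
    rcases le_or_gt n 1 with hn | hn
    · exact Or.inl (isRightChainRing_iff_isUniserialMod.2 (IsSerialFact.isUniserialMod hF hn))
    · exact Or.inr ⟨n, exists_ringEquiv_pi_of_isSerialFact_bot H hF hn⟩
  · rintro (hR | ⟨k, S, _, -, hS, ⟨e⟩⟩)
    · exact hasSerialFact_of_isRightChainRing hR
    · exact hasSerialFact_of_ringEquiv e.symm (hasSerialFact_pi hS)

/-- Proposition: every right ideal of `R` has a serial factorization iff `R` is a right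
chain ring or `R` is (isomorphic to) a finite direct product of right duo right chain
rings. -/
theorem statement10 {R : Type u} [Ring R] [Nontrivial R] :
    (∀ A : Submodule Rᵐᵒᵖ R, HasSerialFact A) ↔
      (IsRightChainRing R ∨
        ∃ (k : ℕ) (S : Fin k → Type u) (inst : ∀ i, Ring (S i)),
          (∀ i, Nontrivial (S i)) ∧
          (∀ i, IsRightDuo (S i) ∧ IsRightChainRing (S i)) ∧
          Nonempty (R ≃+* ((i : Fin k) → S i))) :=
  statement10_general
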